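/- Let D = (d_1,...,d_n) and F = (f_1,...,f_n) be tree degree sequences with n ≥ 3 such that min(d_i, f_i) = 1 for all i. If T_1 and T_2 are independent uniformly random labeled trees realizing D and F respectively, then the expected number of edges common to T_1 and T_2 equals 1. -/

import Mathlib

/-- `G` realizes the degree sequence `d`: vertex `v` has degree `d v`. -/
def realizes {n : ℕ} (G : SimpleGraph (Fin n)) (d : Fin n → ℕ) : Prop :=
  ∀ v, {u | G.Adj v u}.ncard = d v

/-- A tree degree sequence: positive entries summing to `2n - 2`. -/
def isTreeSeq {n : ℕ} (d : Fin n → ℕ) : Prop :=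
  (∀ i, 1 ≤ d i) ∧ (∑ i, d i) = 2 * n - 2

/-- A caterpillar: a tree whose non-leaf vertices span a path. -/
def isCaterpillar {n : ℕ} (T : SimpleGraph (Fin n)) : Prop :=
  T.IsTree ∧ ∃ p : List (Fin n), p.Nodup ∧ p.Chain' T.Adj ∧
    ∀ v, (1 < {u | T.Adj v u}.ncard ↔ v ∈ p)

/-!
Write `T(d)` for the set of trees on `V` with degree sequence `d`, `N_d(x, y)` for the number of
those containing the edge `xy`, and `P_d = ∏ (d_i - 1)!`. Since the degree sum forces `n - 1`
edges, a graph with degrees `d` is a tree as soon as it is connected. If `v` is a leaf of `d`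
attached to `u`, deleting `v` is then a bijection between the trees in `T(d)` containing `vu` and
`T(d')` on `V \ {v}`, where `d'` is `d` with `d_u` lowered by one. By induction on `n` this gives
the classical count `|T(d)| · P_d = (n - 2)!`, and then `N_d(v, u) · P_d = (n - 3)! (d_u - 1)`
whenever `d_v = 1`.

Since every vertex is a leaf for `D` or for `F`, every pair `x, y` has a leaf endpoint for `D` or
two leaf endpoints for `F` (and symmetrically). So with `a = D - 1` and `b = F - 1`, for which
`a_i b_i = 0`, we get `N_D(x, y) N_F(x, y) P_D P_F = (n - 3)!² (a_x + a_y) (b_x + b_y)` for all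
`x, y`. Summing over ordered pairs,
`2 ∑ |E(T₁) ∩ E(T₂)| = ∑ N_D(x, y) N_F(x, y) = 2 ((n - 2)!)² / (P_D P_F) = 2 |T(D)| |T(F)|`.
-/

open Finset SimpleGraph
open scoped Classical Nat

section Graphs

variable {V : Type*}

lemma ncard_setOf_adj (G : SimpleGraph V) (v : V) [Fintype (G.neighborSet v)] :
    {u | G.Adj v u}.ncard = G.degree v := by
  rw [← card_neighborSet_eq_degree, ← Nat.card_eq_fintype_card, Nat.card_coe_set_eq]; rfl

lemma adj_iff_eq_of_ncard_setOf_adj_eq_one {G : SimpleGraph V} {v u : V}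
    (h : {y | G.Adj v y}.ncard = 1) (hu : G.Adj v u) (y : V) : G.Adj v y ↔ y = u := by
  obtain ⟨a, ha⟩ := Set.ncard_eq_one.mp h
  have key (y : V) : G.Adj v y ↔ y = a := by simpa using Set.ext_iff.mp ha y
  rw [key, (key u).mp hu]

lemma ncard_setOf_adj_eq_induce_compl_singleton_add [Finite V] {v : V} {G : SimpleGraph V}
    (w : ({v}ᶜ : Set V)) :
    {y | G.Adj w y}.ncard = {y | (G.induce {v}ᶜ).Adj w y}.ncard + if G.Adj w v then 1 else 0 := by
  have himage : Subtype.val '' {y | (G.induce {v}ᶜ).Adj w y} = {y | G.Adj w y} \ {v} := by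
    ext y
    simp
  rw [← Set.ncard_image_of_injective _ Subtype.val_injective, himage]
  split_ifs with h
  · exact (Set.ncard_sdiff_singleton_add_one h).symm
  · rw [Set.sdiff_singleton_eq_self (s := {y | G.Adj w y}) h, add_zero]

lemma two_mul_ncard_edgeSet_inter [Fintype V] (G H : SimpleGraph V) :
    2 * (G.edgeSet ∩ H.edgeSet).ncard =
      ∑ x, ∑ y, if G.Adj x y ∧ H.Adj x y then 1 else 0 := by
  rw [← edgeSet_inf, ← coe_edgeFinset, Set.ncard_coe_finset]
  convert (sum_degrees_eq_twice_card_edges (G ⊓ H)).symm using 2 with x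
  · congr!
  · rw [← card_neighborFinset_eq_degree, neighborFinset_eq_filter, card_filter]
    rfl

lemma two_mul_sum_sum_ncard_edgeSet_inter [Fintype V]
    (A B : Finset (SimpleGraph V)) :
    2 * ∑ G ∈ A, ∑ H ∈ B, (G.edgeSet ∩ H.edgeSet).ncard =
      ∑ x, ∑ y, #{G ∈ A | G.Adj x y} * #{H ∈ B | H.Adj x y} := by
  simp_rw [mul_sum, two_mul_ncard_edgeSet_inter, card_filter, sum_mul_sum, ite_zero_mul_ite_zero,
    mul_one]
  calc _ = ∑ G ∈ A, ∑ x, ∑ y, ∑ H ∈ B, if G.Adj x y ∧ H.Adj x y then 1 else 0 :=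
        sum_congr rfl fun G _ => by rw [sum_comm]; exact sum_congr rfl fun x _ => sum_comm
    _ = _ := by rw [sum_comm]; exact sum_congr rfl fun x _ => sum_comm

end Graphs

section AttachLeaf

variable {V : Type*} {v u : V}

def attachLeaf (v u : V) (T : SimpleGraph ({v}ᶜ : Set V)) : SimpleGraph V :=
  T.map Subtype.val ⊔ edge v u

variable {T : SimpleGraph ({v}ᶜ : Set V)}

lemma attachLeaf_adj_leaf (hu : u ≠ v) {y : V} : (attachLeaf v u T).Adj v y ↔ y = u := by
  simp only [attachLeaf, sup_adj, map_adj', edge_adj]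
  grind

lemma induce_attachLeaf : (attachLeaf v u T).induce {v}ᶜ = T := by
  ext ⟨a, ha⟩ ⟨b, hb⟩
  simp only [Set.mem_compl_iff, Set.mem_singleton_iff] at ha hb
  simp [attachLeaf, edge_adj, map_adj', ha, hb]
  grind [Adj.ne]

lemma attachLeaf_induce {G : SimpleGraph V} (h : ∀ y, G.Adj v y ↔ y = u) :
    attachLeaf v u (G.induce {v}ᶜ) = G := by
  ext a b
  simp [attachLeaf, edge_adj, map_adj']
  grind [Adj.ne, G.adj_comm]

lemma connected_attachLeaf (hT : T.Connected) (hu : u ≠ v) : (attachLeaf v u T).Connected := by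
  let f : T →g attachLeaf v u T :=
    ⟨Subtype.val, fun {a b} h => Or.inl ⟨h.ne ∘ Subtype.ext, a, b, h, rfl, rfl⟩⟩
  refine (connected_iff_exists_forall_reachable _).mpr ⟨v, fun x => ?_⟩
  by_cases hx : x = v
  · rw [hx]
  · exact ((attachLeaf_adj_leaf hu).mpr rfl).reachable.trans
      ((hT.preconnected ⟨u, hu⟩ ⟨x, hx⟩).map f)

end AttachLeaf

section DegreeSequence

variable {V : Type*} [Fintype V]

def IsTreeDegreeSeq (d : V → ℕ) : Prop :=
  (∀ i, 1 ≤ d i) ∧ ∑ i, d i = 2 * Fintype.card V - 2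

lemma IsTreeDegreeSeq.sum_sub_one {d : V → ℕ} (hd : IsTreeDegreeSeq d) :
    ∑ i, (d i - 1) = Fintype.card V - 2 := by
  have h : ∑ i, (d i - 1 + 1) = ∑ i, d i := sum_congr rfl fun i _ => Nat.sub_add_cancel (hd.1 i)
  rw [sum_add_distrib, sum_const, card_univ, smul_eq_mul, mul_one] at h
  have := hd.2
  omega

lemma IsTreeDegreeSeq.exists_eq_one {d : V → ℕ} (hd : IsTreeDegreeSeq d)
    (hV : 1 ≤ Fintype.card V) : ∃ v, d v = 1 := by
  have hlt : ∑ i, (d i - 1) < ∑ _i : V, 1 := by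
    rw [hd.sum_sub_one, sum_const, card_univ, smul_eq_mul, mul_one]; omega
  obtain ⟨v, -, hv⟩ := exists_lt_of_sum_lt hlt
  exact ⟨v, by have := hd.1 v; omega⟩

lemma IsTreeDegreeSeq.eq_one_of_card_eq_two {d : V → ℕ} (hd : IsTreeDegreeSeq d)
    (hcard : Fintype.card V = 2) (x : V) : d x = 1 := by
  have := sum_eq_zero_iff.mp (hd.sum_sub_one.trans (by omega)) x (mem_univ x)
  have := hd.1 x
  omega

variable [DecidableEq V]

lemma card_compl_singleton (v : V) : Fintype.card ({v}ᶜ : Set V) = Fintype.card V - 1 := by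
  rw [Fintype.card_compl_set, Set.card_singleton]

@[to_additive]
lemma prod_compl_singleton_mul {M : Type*} [CommMonoid M] (f : V → M) (v : V) :
    (∏ w : ({v}ᶜ : Set V), f w) * f v = ∏ x, f x := by
  rw [← prod_subtype ({v}ᶜ : Finset V) (by simp), ← prod_singleton f v, prod_compl_mul_prod]

def pruneDegrees (d : V → ℕ) (v u : V) (w : ({v}ᶜ : Set V)) : ℕ :=
  Function.update d u (d u - 1) w

variable {d : V → ℕ} {v u : V}

lemma sum_pruneDegrees (hd : IsTreeDegreeSeq d) (hv : d v = 1) (hu : u ≠ v) :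
    ∑ w, pruneDegrees d v u w = 2 * Fintype.card ({v}ᶜ : Set V) - 2 := by
  have hsplit := sum_compl_singleton_add (Function.update d u (d u - 1)) v
  rw [Function.update_of_ne hu.symm, hv, sum_update_of_mem (mem_univ u)] at hsplit
  have hd' := sum_eq_add_sum_sdiff_singleton_of_mem (mem_univ u) d
  have := hd.1 u
  have := hd.2
  rw [card_compl_singleton]
  unfold pruneDegrees
  omega

lemma IsTreeDegreeSeq.pruneDegrees (hd : IsTreeDegreeSeq d) (hv : d v = 1) (hu : u ≠ v)
    (hdu : 2 ≤ d u) : IsTreeDegreeSeq (pruneDegrees d v u) := by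
  refine ⟨fun w => ?_, sum_pruneDegrees hd hv hu⟩
  rw [_root_.pruneDegrees, Function.update_apply]
  split_ifs with h
  · omega
  · exact hd.1 w

lemma prod_factorial_pruneDegrees (hv : d v = 1) (hu : u ≠ v) (hdu : 2 ≤ d u) :
    (d u - 1) * ∏ w, (pruneDegrees d v u w - 1)! = ∏ x, (d x - 1)! := by
  have hsplit := prod_compl_singleton_mul (fun x => (Function.update d u (d u - 1) x - 1)!) v
  rw [Function.update_of_ne hu.symm, hv, prod_eq_mul_prod_sdiff_singleton_of_mem (mem_univ u),
    Function.update_self] at hsplit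
  have hrest : ∏ x ∈ univ \ {u}, (Function.update d u (d u - 1) x - 1)! =
      ∏ x ∈ univ \ {u}, (d x - 1)! :=
    prod_congr rfl fun x hx => by rw [Function.update_of_ne (by simpa using hx)]
  rw [hrest, Nat.sub_self, Nat.factorial_zero, mul_one] at hsplit
  rw [prod_eq_mul_prod_sdiff_singleton_of_mem (mem_univ u) fun x => (d x - 1)!,
    ← Nat.mul_factorial_pred (by omega : d u - 1 ≠ 0), mul_assoc, ← hsplit]
  rfl

end DegreeSequence

section Trees

variable {V : Type*} [Fintype V] {d : V → ℕ}

lemma two_mul_card_edgeFinset_eq_sum {G : SimpleGraph V}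
    (hG : ∀ v, {u | G.Adj v u}.ncard = d v) : 2 * #G.edgeFinset = ∑ v, d v := by
  simp [← sum_degrees_eq_twice_card_edges, ← ncard_setOf_adj, hG]

lemma isTree_iff_connected_of_ncard_setOf_adj {G : SimpleGraph V}
    (hG : ∀ v, {u | G.Adj v u}.ncard = d v) (hd : ∑ v, d v = 2 * Fintype.card V - 2) :
    G.IsTree ↔ G.Connected := by
  refine ⟨IsTree.connected, fun hconn => isTree_iff_connected_and_card.mpr ⟨hconn, ?_⟩⟩
  have := hconn.nonempty
  have := Fintype.card_pos (α := V)
  have := two_mul_card_edgeFinset_eq_sum hG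
  rw [Nat.card_eq_fintype_card, ← edgeFinset_card, Nat.card_eq_fintype_card]
  omega

variable [DecidableEq V]

noncomputable def treesWithDegrees (d : V → ℕ) : Finset (SimpleGraph V) :=
  {T | T.IsTree ∧ ∀ v, {u | T.Adj v u}.ncard = d v}

lemma mem_treesWithDegrees {T : SimpleGraph V} :
    T ∈ treesWithDegrees d ↔ T.IsTree ∧ ∀ v, {u | T.Adj v u}.ncard = d v := by
  simp [treesWithDegrees]

lemma mem_treesWithDegrees_iff_connected (hd : ∑ v, d v = 2 * Fintype.card V - 2)
    {T : SimpleGraph V} :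
    T ∈ treesWithDegrees d ↔ T.Connected ∧ ∀ v, {u | T.Adj v u}.ncard = d v := by
  rw [mem_treesWithDegrees]
  exact ⟨fun h => ⟨h.1.connected, h.2⟩,
    fun h => ⟨(isTree_iff_connected_of_ncard_setOf_adj h.2 hd).mpr h.1, h.2⟩⟩

lemma treesWithDegrees_eq_empty_of_eq_zero [Nontrivial V] {w : V} (hw : d w = 0) :
    treesWithDegrees d = ∅ := by
  refine eq_empty_of_forall_notMem fun T hT => ?_
  obtain ⟨hT, hdeg⟩ := mem_treesWithDegrees.mp hT
  have := hT.connected.preconnected.degree_pos_of_nontrivial w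
  rw [← ncard_setOf_adj, hdeg, hw] at this
  exact this.false

lemma treesWithDegrees_eq_singleton_top (hd : IsTreeDegreeSeq d) (hcard : Fintype.card V = 2) :
    treesWithDegrees d = {⊤} := by
  have hone := hd.eq_one_of_card_eq_two hcard
  have : Nonempty V := Fintype.card_pos_iff.mp (by omega)
  ext T
  rw [mem_singleton, mem_treesWithDegrees_iff_connected hd.2]
  constructor
  · rintro ⟨-, hdeg⟩
    have hT := two_mul_card_edgeFinset_eq_sum hdeg
    simp only [hone, sum_const, card_univ, hcard, smul_eq_mul] at hT
    refine edgeFinset_inj.mp (eq_of_subset_of_card_le (edgeFinset_subset_edgeFinset.mpr le_top) ?_)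
    rw [card_edgeFinset_top_eq_card_choose_two, hcard, Nat.choose_self]
    omega
  · rintro rfl
    refine ⟨connected_top, fun x => ?_⟩
    rw [ncard_setOf_adj, complete_graph_degree, hcard, hone]

lemma sum_card_filter_adj_treesWithDegrees (d : V → ℕ) (v : V) :
    ∑ u, #{T ∈ treesWithDegrees d | T.Adj v u} = d v * #(treesWithDegrees d) := by
  simp_rw [card_filter]
  rw [sum_comm, mul_comm, ← smul_eq_mul, ← sum_const]
  refine sum_congr rfl fun T hT => ?_
  rw [← (mem_treesWithDegrees.mp hT).2 v, Set.ncard_eq_toFinset_card', Set.toFinset_ofPred,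
    card_filter]

variable {v u : V}

lemma induce_mem_treesWithDegrees_pruneDegrees (hd : IsTreeDegreeSeq d) (hv : d v = 1)
    (hu : u ≠ v) {T : SimpleGraph V} (hT : T ∈ treesWithDegrees d) (hvu : T.Adj v u) :
    T.induce {v}ᶜ ∈ treesWithDegrees (pruneDegrees d v u) := by
  obtain ⟨hT, hdeg⟩ := mem_treesWithDegrees.mp hT
  have hleaf := adj_iff_eq_of_ncard_setOf_adj_eq_one (by rw [hdeg, hv]) hvu
  refine (mem_treesWithDegrees_iff_connected (sum_pruneDegrees hd hv hu)).mpr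
    ⟨hT.connected.induce_compl_singleton_of_degree_eq_one (by rw [← ncard_setOf_adj, hdeg, hv]),
      fun w => ?_⟩
  have h := ncard_setOf_adj_eq_induce_compl_singleton_add (G := T) w
  rw [hdeg, T.adj_comm, hleaf] at h
  rw [pruneDegrees, Function.update_apply]
  split_ifs at h ⊢ with hwu
  · rw [hwu] at h
    omega
  · omega

lemma attachLeaf_mem_treesWithDegrees (hd : IsTreeDegreeSeq d) (hv : d v = 1) (hu : u ≠ v)
    {T : SimpleGraph ({v}ᶜ : Set V)} (hT : T ∈ treesWithDegrees (pruneDegrees d v u)) :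
    attachLeaf v u T ∈ treesWithDegrees d := by
  obtain ⟨hT, hdeg⟩ := mem_treesWithDegrees.mp hT
  refine (mem_treesWithDegrees_iff_connected hd.2).mpr
    ⟨connected_attachLeaf hT.connected hu, fun w => ?_⟩
  by_cases hw : w = v
  · subst hw
    have hnbr : {y | (attachLeaf w u T).Adj w y} = {u} := Set.ext fun y => attachLeaf_adj_leaf hu
    rw [hnbr, Set.ncard_singleton, hv]
  · have h := ncard_setOf_adj_eq_induce_compl_singleton_add (G := attachLeaf v u T) ⟨w, hw⟩
    rw [induce_attachLeaf, hdeg, adj_comm, attachLeaf_adj_leaf hu, pruneDegrees,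
      Function.update_apply] at h
    split_ifs at h with hwu
    · rw [h, ← hwu]
      exact Nat.sub_add_cancel (hd.1 _)
    · exact h

lemma card_filter_adj_eq_card_treesWithDegrees_pruneDegrees (hd : IsTreeDegreeSeq d)
    (hv : d v = 1) (hu : u ≠ v) :
    #{T ∈ treesWithDegrees d | T.Adj v u} = #(treesWithDegrees (pruneDegrees d v u)) := by
  refine card_nbij' (fun T => T.induce {v}ᶜ) (attachLeaf v u) (fun T hT => ?_) (fun T hT => ?_)
    (fun T hT => ?_) (fun T _ => induce_attachLeaf)
  · obtain ⟨hT, hvu⟩ := mem_filter.mp hT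
    exact induce_mem_treesWithDegrees_pruneDegrees hd hv hu hT hvu
  · exact mem_filter.mpr
      ⟨attachLeaf_mem_treesWithDegrees hd hv hu hT, (attachLeaf_adj_leaf hu).mpr rfl⟩
  · obtain ⟨hT, hvu⟩ := mem_filter.mp hT
    exact attachLeaf_induce
      (adj_iff_eq_of_ncard_setOf_adj_eq_one (by rw [(mem_treesWithDegrees.mp hT).2, hv]) hvu)

/-- The induction step of `card_treesWithDegrees_mul_prod`, with the count on `V \ {v}` as a
hypothesis. -/
theorem card_filter_adj_mul_prod_of_leaf_of_pruned (hd : IsTreeDegreeSeq d) (hv : d v = 1)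
    (hcard : 3 ≤ Fintype.card V)
    (hpruned : ∀ e : ({v}ᶜ : Set V) → ℕ, IsTreeDegreeSeq e →
      #(treesWithDegrees e) * ∏ w, (e w - 1)! = (Fintype.card V - 3)!) (u : V) :
    #{T ∈ treesWithDegrees d | T.Adj v u} * ∏ x, (d x - 1)! =
      (Fintype.card V - 3)! * (d u - 1) := by
  by_cases hu : u = v
  · subst hu
    simp [hv]
  rw [card_filter_adj_eq_card_treesWithDegrees_pruneDegrees hd hv hu]
  obtain hdu | hdu : d u = 1 ∨ 2 ≤ d u := by have := hd.1 u; omega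
  · have : Nontrivial ({v}ᶜ : Set V) :=
      Fintype.one_lt_card_iff_nontrivial.mp (by rw [card_compl_singleton]; omega)
    rw [treesWithDegrees_eq_empty_of_eq_zero (w := ⟨u, hu⟩) (by simp [pruneDegrees, hdu]),
      card_empty, hdu]
    simp
  · rw [← prod_factorial_pruneDegrees hv hu hdu, mul_left_comm,
      hpruned _ (hd.pruneDegrees hv hu hdu), mul_comm]

theorem card_treesWithDegrees_mul_prod (hd : IsTreeDegreeSeq d) (hcard : 2 ≤ Fintype.card V) :
    #(treesWithDegrees d) * ∏ x, (d x - 1)! = (Fintype.card V - 2)! := by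
  induction h : Fintype.card V using Nat.strong_induction_on generalizing V with
  | _ n ih =>
  obtain rfl | h3 : n = 2 ∨ 3 ≤ n := by omega
  · simp [treesWithDegrees_eq_singleton_top hd h, hd.eq_one_of_card_eq_two h]
  obtain ⟨v, hv⟩ := hd.exists_eq_one (by omega)
  have hpruned (e : ({v}ᶜ : Set V) → ℕ) (he : IsTreeDegreeSeq e) :
      #(treesWithDegrees e) * ∏ w, (e w - 1)! = (Fintype.card V - 3)! := by
    have hcard' : Fintype.card ({v}ᶜ : Set V) = n - 1 := by rw [card_compl_singleton, h]
    rw [ih (n - 1) (by omega) he (by omega) hcard', h, show n - 1 - 2 = n - 3 by omega]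
  calc #(treesWithDegrees d) * ∏ x, (d x - 1)!
      = ∑ u, #{T ∈ treesWithDegrees d | T.Adj v u} * ∏ x, (d x - 1)! := by
        rw [← sum_mul, sum_card_filter_adj_treesWithDegrees, hv, one_mul]
    _ = ∑ u, (n - 3)! * (d u - 1) := sum_congr rfl fun u _ => by
        rw [card_filter_adj_mul_prod_of_leaf_of_pruned hd hv (by omega) hpruned u, h]
    _ = (n - 3)! * (n - 2) := by rw [← mul_sum, hd.sum_sub_one, h]
    _ = (n - 2)! := by rw [show n - 2 = n - 3 + 1 by omega, Nat.factorial_succ]; ring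

theorem card_treesWithDegrees_ne_zero (hd : IsTreeDegreeSeq d) (hcard : 2 ≤ Fintype.card V) :
    #(treesWithDegrees d) ≠ 0 := by
  intro h
  have := card_treesWithDegrees_mul_prod hd hcard
  rw [h, zero_mul] at this
  exact Nat.factorial_ne_zero _ this.symm

theorem card_filter_adj_mul_prod_of_leaf (hd : IsTreeDegreeSeq d) (hv : d v = 1)
    (hcard : 3 ≤ Fintype.card V) (u : V) :
    #{T ∈ treesWithDegrees d | T.Adj v u} * ∏ x, (d x - 1)! =
      (Fintype.card V - 3)! * (d u - 1) := by
  refine card_filter_adj_mul_prod_of_leaf_of_pruned hd hv hcard (fun e he => ?_) u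
  rw [card_treesWithDegrees_mul_prod he (by rw [card_compl_singleton]; omega),
    card_compl_singleton, Nat.sub_sub]

theorem card_filter_adj_mul_prod (hd : IsTreeDegreeSeq d) (hcard : 3 ≤ Fintype.card V)
    {x y : V} (hxy : d x = 1 ∨ d y = 1) :
    #{T ∈ treesWithDegrees d | T.Adj x y} * ∏ i, (d i - 1)! =
      (Fintype.card V - 3)! * (d x - 1 + (d y - 1)) := by
  rcases hxy with h | h
  · rw [card_filter_adj_mul_prod_of_leaf hd h hcard, h, Nat.sub_self, zero_add]
  · rw [filter_congr fun T _ => T.adj_comm x y, card_filter_adj_mul_prod_of_leaf hd h hcard, h,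
      Nat.sub_self, add_zero]

theorem card_filter_adj_mul_card_filter_adj {D F : V → ℕ} (hD : IsTreeDegreeSeq D)
    (hF : IsTreeDegreeSeq F) (hDF : ∀ i, D i = 1 ∨ F i = 1) (hcard : 3 ≤ Fintype.card V)
    (x y : V) :
    (#{T ∈ treesWithDegrees D | T.Adj x y} * ∏ i, (D i - 1)!) *
        (#{T ∈ treesWithDegrees F | T.Adj x y} * ∏ i, (F i - 1)!) =
      (Fintype.card V - 3)! ^ 2 * ((D x - 1 + (D y - 1)) * (F x - 1 + (F y - 1))) := by
  by_cases hDxy : D x = 1 ∨ D y = 1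
  · by_cases hFxy : F x = 1 ∨ F y = 1
    · rw [card_filter_adj_mul_prod hD hcard hDxy, card_filter_adj_mul_prod hF hcard hFxy]
      ring
    · have hx := (hDF x).resolve_right (by tauto)
      have hy := (hDF y).resolve_right (by tauto)
      rw [card_filter_adj_mul_prod hD hcard hDxy, hx, hy]
      simp
  · have hx := (hDF x).resolve_left (by tauto)
    have hy := (hDF y).resolve_left (by tauto)
    rw [card_filter_adj_mul_prod hF hcard (Or.inl hx), hx, hy]
    simp

end Trees

lemma sum_sum_add_mul_add {ι R : Type*} [Fintype ι] [CommSemiring R] (a b : ι → R)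
    (hab : ∀ i, a i * b i = 0) :
    ∑ i, ∑ j, (a i + a j) * (b i + b j) = 2 * (∑ i, a i) * ∑ i, b i := by
  simp only [add_mul, mul_add, sum_add_distrib, ← mul_sum, ← sum_mul, hab, sum_const_zero]
  ring

theorem sum_sum_ncard_edgeSet_inter_treesWithDegrees {V : Type*} [Fintype V] [DecidableEq V]
    {D F : V → ℕ} (hD : IsTreeDegreeSeq D) (hF : IsTreeDegreeSeq F)
    (hDF : ∀ i, D i = 1 ∨ F i = 1) (hcard : 3 ≤ Fintype.card V) :
    ∑ T₁ ∈ treesWithDegrees D, ∑ T₂ ∈ treesWithDegrees F,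
        (T₁.edgeSet ∩ T₂.edgeSet).ncard =
      #(treesWithDegrees D) * #(treesWithDegrees F) := by
  have hP : 0 < (∏ i, (D i - 1)!) * ∏ i, (F i - 1)! := by positivity
  have hab i : (D i - 1) * (F i - 1) = 0 := by rcases hDF i with h | h <;> simp [h]
  have hfac : (Fintype.card V - 2)! = (Fintype.card V - 2) * (Fintype.card V - 3)! := by
    rw [← Nat.mul_factorial_pred (by omega : Fintype.card V - 2 ≠ 0), Nat.sub_sub]
  refine Nat.eq_of_mul_eq_mul_right hP (Nat.eq_of_mul_eq_mul_left two_pos ?_)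
  calc 2 * ((∑ T₁ ∈ treesWithDegrees D, ∑ T₂ ∈ treesWithDegrees F,
          (T₁.edgeSet ∩ T₂.edgeSet).ncard) * ((∏ i, (D i - 1)!) * ∏ i, (F i - 1)!))
      = ∑ x, ∑ y, (#{T ∈ treesWithDegrees D | T.Adj x y} * ∏ i, (D i - 1)!) *
          (#{T ∈ treesWithDegrees F | T.Adj x y} * ∏ i, (F i - 1)!) := by
        rw [← mul_assoc, two_mul_sum_sum_ncard_edgeSet_inter, sum_mul]
        refine sum_congr rfl fun x _ => ?_
        rw [sum_mul]
        exact sum_congr rfl fun y _ => by ring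
    _ = ∑ x, ∑ y,
          (Fintype.card V - 3)! ^ 2 * ((D x - 1 + (D y - 1)) * (F x - 1 + (F y - 1))) := by
        simp_rw [card_filter_adj_mul_card_filter_adj hD hF hDF hcard]
    _ = 2 * ((Fintype.card V - 2) * (Fintype.card V - 3)!) ^ 2 := by
        simp_rw [← mul_sum]
        rw [sum_sum_add_mul_add _ _ hab, hD.sum_sub_one, hF.sum_sub_one]
        ring
    _ = 2 * (#(treesWithDegrees D) * #(treesWithDegrees F) *
          ((∏ i, (D i - 1)!) * ∏ i, (F i - 1)!)) := by
        rw [mul_mul_mul_comm, card_treesWithDegrees_mul_prod hD (by omega),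
          card_treesWithDegrees_mul_prod hF (by omega), hfac]
        ring

open scoped Classical in
theorem expected_common_edges_eq_one (n : ℕ) (hn : 3 ≤ n) (D F : Fin n → ℕ)
    (hD : isTreeSeq D) (hF : isTreeSeq F) (hmin : ∀ i, min (D i) (F i) = 1) :
    (∑ T₁ ∈ Finset.univ.filter (fun T : SimpleGraph (Fin n) => T.IsTree ∧ realizes T D),
        ∑ T₂ ∈ Finset.univ.filter (fun T : SimpleGraph (Fin n) => T.IsTree ∧ realizes T F),
          ((T₁.edgeSet ∩ T₂.edgeSet).ncard : ℚ)) /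
      (((Finset.univ.filter (fun T : SimpleGraph (Fin n) => T.IsTree ∧ realizes T D)).card : ℚ) *
       ((Finset.univ.filter (fun T : SimpleGraph (Fin n) => T.IsTree ∧ realizes T F)).card : ℚ))
      = 1 := by
  have htrees (d : Fin n → ℕ) :
      ({T | T.IsTree ∧ realizes T d} : Finset (SimpleGraph (Fin n))) = treesWithDegrees d := by
    unfold treesWithDegrees realizes
    congr
  have hcard : 3 ≤ Fintype.card (Fin n) := by simpa using hn
  have hD' : IsTreeDegreeSeq D := by simpa [IsTreeDegreeSeq, isTreeSeq] using hD
  have hF' : IsTreeDegreeSeq F := by simpa [IsTreeDegreeSeq, isTreeSeq] using hF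
  have hDF i : D i = 1 ∨ F i = 1 := by have := hmin i; omega
  rw [htrees, htrees, div_eq_one_iff_eq (by
    exact_mod_cast mul_ne_zero (card_treesWithDegrees_ne_zero hD' (by omega))
      (card_treesWithDegrees_ne_zero hF' (by omega)))]
  exact_mod_cast sum_sum_ncard_edgeSet_inter_treesWithDegrees hD' hF' hDF hcard
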